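/- arXiv:2103.00924 — 2 statements merged into one kernel-verified Lean document; each statement's English description precedes it below -/
import Mathlib

section
/- Let ρ be a tripartite state on H_A ⊗ H_B ⊗ H_C satisfying the condition d_{AB;C} ≥ d_{A;C}, meaning that for every sequential measurement Π^{AB} (measurement on A followed by conditional measurement on B) the induced change in conditional mutual information satisfies S_{C|Π^{AB}}(ρ) − S_{C|AB}(ρ) ≥ S_{C|Π^{A}}(ρ) − S_{C|A}(ρ). Then D_{A;B;C}(ρ) ≥ D_{A;B}(ρ^{AB}) + D_{A;C}(ρ^{AC}). -/
open Matrix Kronecker BigOperators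
open scoped ComplexOrder

noncomputable section

def IsState {n : Type*} [Fintype n] [DecidableEq n] (ρ : Matrix n n ℂ) : Prop :=
  ρ.PosSemidef ∧ ρ.trace = 1

/-- Von Neumann entropy via the eigenvalues of a Hermitian matrix. -/
noncomputable def vnEntropy {n : Type*} [Fintype n] [DecidableEq n] (ρ : Matrix n n ℂ) : ℝ :=
  if h : ρ.IsHermitian then ∑ i, Real.negMulLog (h.eigenvalues i) else 0

/-- A rank-one von Neumann measurement: a family of rank-one orthogonal
projections summing to the identity. -/
structure VNMeas (n : Type*) [Fintype n] [DecidableEq n] where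
  P : n → Matrix n n ℂ
  herm : ∀ j, (P j).IsHermitian
  idem : ∀ j, P j * P j = P j
  rankOne : ∀ j, (P j).trace = 1
  orth : ∀ j k, j ≠ k → P j * P k = 0
  sum_eq : ∑ j, P j = 1

variable {A B : Type*} [Fintype A] [DecidableEq A] [Fintype B] [DecidableEq B]

/-- reduced state on the first factor -/
noncomputable def margFst (ρ : Matrix (A × B) (A × B) ℂ) : Matrix A A ℂ :=
  fun a a' => ∑ b, ρ (a, b) (a', b)

/-- reduced state on the second factor -/
noncomputable def margSnd (ρ : Matrix (A × B) (A × B) ℂ) : Matrix B B ℂ :=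
  fun b b' => ∑ a, ρ (a, b) (a, b')

/-- the post-measurement state `Σ_j (Π_j ⊗ 1) ρ (Π_j ⊗ 1)` -/
noncomputable def measFst (M : VNMeas A) (ρ : Matrix (A × B) (A × B) ℂ) :
    Matrix (A × B) (A × B) ℂ :=
  ∑ j, (M.P j ⊗ₖ (1 : Matrix B B ℂ)) * ρ * (M.P j ⊗ₖ (1 : Matrix B B ℂ))

/-- quantum mutual information -/
noncomputable def mutualInfo (ρ : Matrix (A × B) (A × B) ℂ) : ℝ :=
  vnEntropy (margFst ρ) + vnEntropy (margSnd ρ) - vnEntropy ρ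

/-- bipartite quantum discord with measurement on the first party -/
noncomputable def discord (ρ : Matrix (A × B) (A × B) ℂ) : ℝ :=
  ⨅ M : VNMeas A,
    ((vnEntropy (measFst M ρ) - vnEntropy (margFst (measFst M ρ))) -
      (vnEntropy ρ - vnEntropy (margFst ρ)))


variable {C : Type*} [Fintype C] [DecidableEq C]

/-- threefold Kronecker product on `A × B × C` -/
noncomputable def kron3 (M : Matrix A A ℂ) (N : Matrix B B ℂ) (K : Matrix C C ℂ) :
    Matrix (A × B × C) (A × B × C) ℂ :=
  fun p q => M p.1 q.1 * N p.2.1 q.2.1 * K p.2.2 q.2.2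

/-- trace out `C`: the reduced state `ρ^{AB}` -/
noncomputable def ptrC3 (ρ : Matrix (A × B × C) (A × B × C) ℂ) : Matrix (A × B) (A × B) ℂ :=
  fun x y => ∑ c, ρ (x.1, x.2, c) (y.1, y.2, c)

/-- trace out `B`: the reduced state `ρ^{AC}` -/
noncomputable def ptrB3 (ρ : Matrix (A × B × C) (A × B × C) ℂ) : Matrix (A × C) (A × C) ℂ :=
  fun x y => ∑ b, ρ (x.1, b, x.2) (y.1, b, y.2)

/-- trace out `A`: the reduced state `ρ^{BC}` -/
noncomputable def ptrA3 (ρ : Matrix (A × B × C) (A × B × C) ℂ) : Matrix (B × C) (B × C) ℂ :=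
  fun x y => ∑ a, ρ (a, x) (a, y)

/-- the reduced state `ρ^{A}` of a tripartite state -/
noncomputable def ptrBC3 (ρ : Matrix (A × B × C) (A × B × C) ℂ) : Matrix A A ℂ :=
  fun a a' => ∑ z : B × C, ρ (a, z) (a', z)

/-- A sequential conditional measurement: a rank-one von Neumann measurement on `A`
followed by a conditional rank-one von Neumann measurement on `B`. -/
structure SeqMeas3 (A B : Type*) [Fintype A] [DecidableEq A] [Fintype B] [DecidableEq B] where
  fst : VNMeas A
  snd : A → VNMeas B

/-- state after the measurement on `A` only -/
noncomputable def meas1 (m : SeqMeas3 A B) (ρ : Matrix (A × B × C) (A × B × C) ℂ) :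
    Matrix (A × B × C) (A × B × C) ℂ :=
  ∑ j, kron3 (m.fst.P j) (1 : Matrix B B ℂ) (1 : Matrix C C ℂ) * ρ *
    kron3 (m.fst.P j) (1 : Matrix B B ℂ) (1 : Matrix C C ℂ)

/-- state after the full sequential measurement `Π^{AB}` -/
noncomputable def meas2 (m : SeqMeas3 A B) (ρ : Matrix (A × B × C) (A × B × C) ℂ) :
    Matrix (A × B × C) (A × B × C) ℂ :=
  ∑ j, ∑ k, kron3 (m.fst.P j) ((m.snd j).P k) (1 : Matrix C C ℂ) * ρ *
    kron3 (m.fst.P j) ((m.snd j).P k) (1 : Matrix C C ℂ)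

/-- the quantity optimized in the tripartite multipartite quantum discord,
`−S_{BC|A}(ρ) + S_{B|Π^A}(ρ) + S_{C|Π^{AB}}(ρ)`. -/
noncomputable def mqd3Val (m : SeqMeas3 A B) (ρ : Matrix (A × B × C) (A × B × C) ℂ) : ℝ :=
  (vnEntropy (ptrC3 (meas1 m ρ)) - vnEntropy (ptrBC3 (meas1 m ρ)))
    + (vnEntropy (meas2 m ρ) - vnEntropy (ptrC3 (meas2 m ρ)))
    - (vnEntropy ρ - vnEntropy (ptrBC3 ρ))

/-- the tripartite multipartite quantum discord `D_{A;B;C}` with ordering `A → B` -/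
noncomputable def mqd3 (ρ : Matrix (A × B × C) (A × B × C) ℂ) : ℝ :=
  ⨅ m : SeqMeas3 A B, mqd3Val m ρ

/-- lift a matrix on `A × B` to `A × B × C` by tensoring with the identity on `C` -/
noncomputable def liftAB (N : Matrix (A × B) (A × B) ℂ) :
    Matrix (A × B × C) (A × B × C) ℂ :=
  fun p q => N (p.1, p.2.1) (q.1, q.2.1) * (if p.2.2 = q.2.2 then 1 else 0)

/-- state after a von Neumann measurement on the composite party `AB` -/
noncomputable def measAB (M : VNMeas (A × B)) (ρ : Matrix (A × B × C) (A × B × C) ℂ) :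
    Matrix (A × B × C) (A × B × C) ℂ :=
  ∑ j, liftAB (M.P j) * ρ * liftAB (M.P j)

/-- bipartite quantum discord `D_{AB;C}` with `AB` regarded as a single measured party -/
noncomputable def discordAB_C (ρ : Matrix (A × B × C) (A × B × C) ℂ) : ℝ :=
  ⨅ M : VNMeas (A × B),
    ((vnEntropy (measAB M ρ) - vnEntropy (ptrC3 (measAB M ρ))) -
      (vnEntropy ρ - vnEntropy (ptrC3 ρ)))

/-!
Fix a sequential measurement `Π^{AB}` with first stage `Π^A`. Measuring `A` commutes with
tracing out `B` or `C`, so the reduced states of the post-measurement state on `AB` and `AC`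
are the post-measurement states of `Π^A` applied to `ρ^{AB}` and `ρ^{AC}`. Hence
`D_{A;B}(ρ^{AB}) + D_{A;C}(ρ^{AC})` is at most the sum of the two conditional-entropy increments
caused by `Π^A`; the hypothesis trades the `AC` increment for the `AB → C` increment of the full
measurement, and the resulting sum telescopes to the MQD objective of `Π^{AB}`.
-/

section State

variable {n : Type*} [Fintype n] [DecidableEq n]

def VNMeas.standard : VNMeas n where
  P j := single j j 1
  herm j := by rw [IsHermitian, conjTranspose_single, star_one]
  idem j := by rw [single_mul_single_same, one_mul]
  rankOne j := trace_single_eq_same _ _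
  orth j k hjk := by simp [hjk]
  sum_eq := by
    ext i k
    by_cases h : i = k <;> simp [Matrix.sum_apply, single_apply, one_apply, h]

lemma IsState.sum_eigenvalues {ρ : Matrix n n ℂ} (h : IsState ρ) :
    ∑ i, h.1.1.eigenvalues i = 1 := by
  simpa using congrArg RCLike.re (h.1.1.trace_eq_sum_eigenvalues.symm.trans h.2)

lemma IsState.eigenvalues_le_one {ρ : Matrix n n ℂ} (h : IsState ρ) (i : n) :
    h.1.1.eigenvalues i ≤ 1 :=
  h.sum_eigenvalues ▸
    Finset.single_le_sum (fun j _ => h.1.eigenvalues_nonneg j) (Finset.mem_univ i)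

lemma IsState.vnEntropy_nonneg {ρ : Matrix n n ℂ} (h : IsState ρ) : 0 ≤ vnEntropy ρ := by
  rw [vnEntropy, dif_pos h.1.1]
  exact Finset.sum_nonneg fun i _ =>
    Real.negMulLog_nonneg (h.1.eigenvalues_nonneg i) (h.eigenvalues_le_one i)

lemma Matrix.PosSemidef.vnEntropy_le_card {ρ : Matrix n n ℂ} (h : ρ.PosSemidef) :
    vnEntropy ρ ≤ Fintype.card n := by
  rw [vnEntropy, dif_pos h.1, ← nsmul_one, ← Finset.card_univ, ← Finset.sum_const]
  refine Finset.sum_le_sum fun i _ => ?_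
  linarith [Real.negMulLog_le_one_sub_self (h.eigenvalues_nonneg i), h.eigenvalues_nonneg i]

lemma IsState.sum_mul_mul_conjTranspose {ι : Type*} [Fintype ι] {ρ : Matrix n n ℂ}
    (h : IsState ρ) (K : ι → Matrix n n ℂ) (hK : ∑ j, (K j)ᴴ * K j = 1) :
    IsState (∑ j, K j * ρ * (K j)ᴴ) := by
  refine ⟨posSemidef_sum _ fun j _ => h.1.mul_mul_conjTranspose_same (K j), ?_⟩
  rw [trace_sum]
  simp_rw [trace_mul_cycle _ ρ, ← trace_sum, ← Finset.sum_mul, hK, one_mul]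
  exact h.2

end State

section PartialTrace

variable {n m N : Type*} [Fintype m]

def partialTrace (e : n × m ≃ N) (ρ : Matrix N N ℂ) : Matrix n n ℂ :=
  fun x y => ∑ b, ρ (e (x, b)) (e (y, b))

lemma partialTrace_eq_sum_submatrix (e : n × m ≃ N) (ρ : Matrix N N ℂ) :
    partialTrace e ρ = ∑ b, ρ.submatrix (fun x => e (x, b)) (fun x => e (x, b)) := by
  ext x y
  simp [partialTrace, Matrix.sum_apply]

lemma IsState.partialTrace [Fintype n] [DecidableEq n] [Fintype N] [DecidableEq N]
    {ρ : Matrix N N ℂ} (h : IsState ρ) (e : n × m ≃ N) :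
    IsState (partialTrace e ρ) := by
  refine ⟨?_, ?_⟩
  · rw [partialTrace_eq_sum_submatrix]
    exact posSemidef_sum _ fun b _ => h.1.submatrix _
  · rw [← h.2, trace, trace, ← e.sum_comp, Fintype.sum_prod_type]
    rfl

end PartialTrace

lemma IsState.margFst {ρ : Matrix (A × B) (A × B) ℂ} (h : IsState ρ) : IsState (margFst ρ) :=
  h.partialTrace (Equiv.refl _)

lemma IsState.ptrC3 {ρ : Matrix (A × B × C) (A × B × C) ℂ} (h : IsState ρ) :
    IsState (ptrC3 ρ) :=
  h.partialTrace (Equiv.prodAssoc A B C)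

lemma IsState.ptrB3 {ρ : Matrix (A × B × C) (A × B × C) ℂ} (h : IsState ρ) :
    IsState (ptrB3 ρ) :=
  h.partialTrace ((Equiv.prodAssoc A C B).trans ((Equiv.refl A).prodCongr (Equiv.prodComm C B)))

lemma IsState.measFst (M : VNMeas A) {ρ : Matrix (A × B) (A × B) ℂ} (h : IsState ρ) :
    IsState (measFst M ρ) := by
  have hP : ∀ j, (M.P j ⊗ₖ (1 : Matrix B B ℂ))ᴴ = M.P j ⊗ₖ 1 := fun j => by
    rw [conjTranspose_kronecker, (M.herm j).eq, conjTranspose_one]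
  have hsum : ∑ j, (M.P j ⊗ₖ (1 : Matrix B B ℂ))ᴴ * (M.P j ⊗ₖ 1) = 1 := by
    simp_rw [hP, ← mul_kronecker_mul, M.idem, mul_one, ← one_kronecker_one, ← M.sum_eq]
    exact (map_sum ((kroneckerBilinear (R := ℂ)).flip (1 : Matrix B B ℂ)) _ _).symm
  simpa only [_root_.measFst, hP] using h.sum_mul_mul_conjTranspose _ hsum

instance : Nonempty (SeqMeas3 A B) := ⟨⟨VNMeas.standard, fun _ => VNMeas.standard⟩⟩

-- `ciInf_le` needs the objective bounded below; an unbounded infimum would be the junk value `0`.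
lemma discord_le {σ : Matrix (A × B) (A × B) ℂ} (h : IsState σ) (M : VNMeas A) :
    discord σ ≤ (vnEntropy (measFst M σ) - vnEntropy (margFst (measFst M σ))) -
      (vnEntropy σ - vnEntropy (margFst σ)) := by
  refine ciInf_le ⟨-(Fintype.card A : ℝ) - (vnEntropy σ - vnEntropy (margFst σ)), ?_⟩ M
  rintro _ ⟨M', rfl⟩
  have hM' := h.measFst M'
  linarith [hM'.vnEntropy_nonneg, hM'.margFst.1.vnEntropy_le_card]

omit [Fintype A] [DecidableEq A] [Fintype B] [DecidableEq B] [DecidableEq C] in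
lemma ptrC3_sum {ι : Type*} (s : Finset ι) (f : ι → Matrix (A × B × C) (A × B × C) ℂ) :
    ptrC3 (∑ j ∈ s, f j) = ∑ j ∈ s, ptrC3 (f j) := by
  ext x y
  simp only [ptrC3, Matrix.sum_apply]
  exact Finset.sum_comm

omit [Fintype A] [DecidableEq A] [DecidableEq B] [Fintype C] [DecidableEq C] in
lemma ptrB3_sum {ι : Type*} (s : Finset ι) (f : ι → Matrix (A × B × C) (A × B × C) ℂ) :
    ptrB3 (∑ j ∈ s, f j) = ∑ j ∈ s, ptrB3 (f j) := by
  ext x y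
  simp only [ptrB3, Matrix.sum_apply]
  exact Finset.sum_comm

omit [DecidableEq A] [DecidableEq B] in
lemma ptrC3_kron3_mul (P : Matrix A A ℂ) (Q : Matrix B B ℂ)
    (ρ : Matrix (A × B × C) (A × B × C) ℂ) :
    ptrC3 (kron3 P Q 1 * ρ) = (P ⊗ₖ Q) * ptrC3 ρ := by
  ext ⟨a, b⟩ ⟨a', b'⟩
  simp only [ptrC3, mul_apply, kron3, kroneckerMap_apply, one_apply, mul_ite, mul_one, mul_zero,
    ite_mul, zero_mul, Fintype.sum_prod_type, Finset.sum_ite_eq, Finset.mem_univ, ↓reduceIte,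
    Finset.mul_sum]
  rw [Finset.sum_comm]
  exact Finset.sum_congr rfl fun _ _ => Finset.sum_comm

omit [DecidableEq A] [DecidableEq B] in
lemma ptrC3_mul_kron3 (P : Matrix A A ℂ) (Q : Matrix B B ℂ)
    (ρ : Matrix (A × B × C) (A × B × C) ℂ) :
    ptrC3 (ρ * kron3 P Q 1) = ptrC3 ρ * (P ⊗ₖ Q) := by
  ext ⟨a, b⟩ ⟨a', b'⟩
  simp only [ptrC3, mul_apply, kron3, kroneckerMap_apply, one_apply, mul_ite, mul_one, mul_zero,
    Fintype.sum_prod_type, Finset.sum_ite_eq', Finset.mem_univ, ↓reduceIte, Finset.sum_mul]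
  rw [Finset.sum_comm]
  exact Finset.sum_congr rfl fun _ _ => Finset.sum_comm

omit [DecidableEq A] [DecidableEq C] in
lemma ptrB3_kron3_mul (P : Matrix A A ℂ) (R : Matrix C C ℂ)
    (ρ : Matrix (A × B × C) (A × B × C) ℂ) :
    ptrB3 (kron3 P 1 R * ρ) = (P ⊗ₖ R) * ptrB3 ρ := by
  ext ⟨a, c⟩ ⟨a', c'⟩
  simp only [ptrB3, mul_apply, kron3, kroneckerMap_apply, one_apply, mul_ite, mul_one, mul_zero,
    ite_mul, zero_mul, Fintype.sum_prod_type, Finset.sum_ite_irrel, Finset.sum_const_zero,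
    Finset.sum_ite_eq, Finset.mem_univ, ↓reduceIte, Finset.mul_sum]
  rw [Finset.sum_comm]
  exact Finset.sum_congr rfl fun _ _ => Finset.sum_comm

omit [DecidableEq A] [DecidableEq C] in
lemma ptrB3_mul_kron3 (P : Matrix A A ℂ) (R : Matrix C C ℂ)
    (ρ : Matrix (A × B × C) (A × B × C) ℂ) :
    ptrB3 (ρ * kron3 P 1 R) = ptrB3 ρ * (P ⊗ₖ R) := by
  ext ⟨a, c⟩ ⟨a', c'⟩
  simp only [ptrB3, mul_apply, kron3, kroneckerMap_apply, one_apply, mul_ite, mul_one, mul_zero,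
    ite_mul, zero_mul, Fintype.sum_prod_type, Finset.sum_ite_irrel, Finset.sum_const_zero,
    Finset.sum_ite_eq', Finset.mem_univ, ↓reduceIte, Finset.sum_mul]
  rw [Finset.sum_comm]
  exact Finset.sum_congr rfl fun _ _ => Finset.sum_comm

omit [Fintype A] [DecidableEq A] [DecidableEq B] [DecidableEq C] in
lemma margFst_ptrC3 (ρ : Matrix (A × B × C) (A × B × C) ℂ) :
    margFst (ptrC3 ρ) = ptrBC3 ρ := by
  ext a a'
  simp [margFst, ptrC3, ptrBC3, Fintype.sum_prod_type]

omit [Fintype A] [DecidableEq A] [DecidableEq B] [DecidableEq C] in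
lemma margFst_ptrB3 (ρ : Matrix (A × B × C) (A × B × C) ℂ) :
    margFst (ptrB3 ρ) = ptrBC3 ρ := by
  ext a a'
  simp only [margFst, ptrB3, ptrBC3, Fintype.sum_prod_type]
  exact Finset.sum_comm

lemma ptrC3_meas1 (m : SeqMeas3 A B) (ρ : Matrix (A × B × C) (A × B × C) ℂ) :
    ptrC3 (meas1 m ρ) = measFst m.fst (ptrC3 ρ) := by
  simp only [meas1, measFst, ptrC3_sum, ptrC3_mul_kron3, ptrC3_kron3_mul]

lemma ptrB3_meas1 (m : SeqMeas3 A B) (ρ : Matrix (A × B × C) (A × B × C) ℂ) :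
    ptrB3 (meas1 m ρ) = measFst m.fst (ptrB3 ρ) := by
  simp only [meas1, measFst, ptrB3_sum, ptrB3_mul_kron3, ptrB3_kron3_mul]

/-- if `d_{AB;C} ≥ d_{A;C}` for every sequential measurement, then
`D_{A;B;C}(ρ) ≥ D_{A;B}(ρ^{AB}) + D_{A;C}(ρ^{AC})`. -/
theorem mqd3_ge_discordAB_add_discordAC
    (ρ : Matrix (A × B × C) (A × B × C) ℂ) (hρ : IsState ρ)
    (hd : ∀ m : SeqMeas3 A B,
      (vnEntropy (meas2 m ρ) - vnEntropy (ptrC3 (meas2 m ρ))) -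
          (vnEntropy ρ - vnEntropy (ptrC3 ρ)) ≥
        (vnEntropy (ptrB3 (meas1 m ρ)) - vnEntropy (ptrBC3 (meas1 m ρ))) -
          (vnEntropy (ptrB3 ρ) - vnEntropy (ptrBC3 ρ))) :
    mqd3 ρ ≥ discord (ptrC3 ρ) + discord (ptrB3 ρ) := by
  rw [ge_iff_le, mqd3]
  refine le_ciInf fun m => ?_
  have hAB := discord_le hρ.ptrC3 m.fst
  have hAC := discord_le hρ.ptrB3 m.fst
  rw [← ptrC3_meas1, margFst_ptrC3, margFst_ptrC3] at hAB
  rw [← ptrB3_meas1, margFst_ptrB3, margFst_ptrB3] at hAC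
  rw [mqd3Val]
  linarith [hd m]

end
end

section
/- For a product state ρ = ρ^{AB} ⊗ ρ^C on H_A ⊗ H_B ⊗ H_C, the tripartite multipartite quantum discord reduces to the bipartite discord: D_{A;B;C}(ρ^{AB} ⊗ ρ^C) = D_{A;B}(ρ^{AB}). -/
/-!
On a product state every post-measurement state is again a product with the untouched factor
`ρ^C`, and tracing out `C` just drops it since `tr ρ^C = 1`. Entropy is additive on tensor products
of states (the eigenvalues multiply), so `S(ρ^C)` cancels between `S_{C|Π^{AB}}` and `S_{BC|A}`;
what remains is the bipartite discord objective of `ρ^{AB}` for the measurement on `A`, whatever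
the conditional measurements on `B` are. Hence both infima range over the same values.
-/

open Matrix Kronecker BigOperators
open scoped ComplexOrder

noncomputable section

variable {A B : Type*} [Fintype A] [DecidableEq A] [Fintype B] [DecidableEq B]

variable {C : Type*} [Fintype C] [DecidableEq C]

/-- the product state `ρ^{AB} ⊗ ρ^C` as a matrix on `A × B × C` -/
noncomputable def prodState3 (ρAB : Matrix (A × B) (A × B) ℂ) (ρC : Matrix C C ℂ) :
    Matrix (A × B × C) (A × B × C) ℂ :=
  fun p q => ρAB (p.1, p.2.1) (q.1, q.2.1) * ρC p.2.2 q.2.2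

section Entropy

open Polynomial

variable {m n ι κ : Type*}

theorem vnEntropy_of_isHermitian [Fintype n] [DecidableEq n] {M : Matrix n n ℂ}
    (hM : M.IsHermitian) : vnEntropy M = ∑ i, Real.negMulLog (hM.eigenvalues i) :=
  dif_pos hM

theorem vnEntropy_eq_of_charpoly_eq [Fintype n] [DecidableEq n] [Fintype ι] {M : Matrix n n ℂ}
    (hM : M.IsHermitian) (d : ι → ℝ) (h : M.charpoly = ∏ i, (X - Polynomial.C (d i : ℂ))) :
    vnEntropy M = ∑ i, Real.negMulLog (d i) := by
  have hroots := hM.roots_charpoly_eq_eigenvalues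
  rw [h, roots_prod _ _ (Finset.prod_ne_zero_iff.mpr fun i _ => X_sub_C_ne_zero _)] at hroots
  have hspec : Multiset.map hM.eigenvalues Finset.univ.val = Multiset.map d Finset.univ.val := by
    apply Multiset.map_injective Complex.ofReal_injective
    simpa [Multiset.map_map] using hroots.symm
  simpa only [vnEntropy_of_isHermitian hM, Finset.sum_eq_multiset_sum, Multiset.map_map,
    Function.comp_def] using
    congrArg (fun s => (s.map Real.negMulLog).sum) hspec

theorem vnEntropy_reindex [Fintype m] [DecidableEq m] [Fintype n] [DecidableEq n]
    {M : Matrix n n ℂ} (hM : M.IsHermitian) (e : n ≃ m) :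
    vnEntropy (Matrix.reindex e e M) = vnEntropy M := by
  rw [vnEntropy_eq_of_charpoly_eq (hM.reindex e) hM.eigenvalues
    ((charpoly_reindex e M).trans hM.charpoly_eq), vnEntropy_of_isHermitian hM]

theorem Matrix.IsHermitian.kronecker {α : Type*} [CommMagma α] [StarMul α] {N : Matrix m m α}
    {K : Matrix n n α} (hN : N.IsHermitian) (hK : K.IsHermitian) : (N ⊗ₖ K).IsHermitian := by
  rw [IsHermitian, conjTranspose_kronecker, hN.eq, hK.eq]

theorem Matrix.IsHermitian.charpoly_kronecker [Fintype m] [DecidableEq m] [Fintype n]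
    [DecidableEq n] {N : Matrix m m ℂ} {K : Matrix n n ℂ}
    (hN : N.IsHermitian) (hK : K.IsHermitian) :
    (N ⊗ₖ K).charpoly =
      ∏ p : m × n, (X - Polynomial.C ((hN.eigenvalues p.1 * hK.eigenvalues p.2 : ℝ) : ℂ)) := by
  conv_lhs => rw [hN.spectral_theorem, hK.spectral_theorem, Unitary.conjStarAlgAut_apply,
      Unitary.conjStarAlgAut_apply]
  rw [mul_kronecker_mul, mul_kronecker_mul, charpoly_mul_comm, ← Matrix.mul_assoc,
    ← mul_kronecker_mul, Unitary.coe_star_mul_self, Unitary.coe_star_mul_self, one_kronecker_one,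
    Matrix.one_mul, diagonal_kronecker_diagonal, charpoly_diagonal]
  simp

theorem sum_negMulLog_mul_of_sum_eq_one [Fintype ι] [Fintype κ] {x : ι → ℝ} {y : κ → ℝ}
    (hx : ∑ i, x i = 1) (hy : ∑ k, y k = 1) :
    ∑ p : ι × κ, Real.negMulLog (x p.1 * y p.2) =
      ∑ i, Real.negMulLog (x i) + ∑ k, Real.negMulLog (y k) := by
  simp only [Fintype.sum_prod_type, Real.negMulLog_mul, Finset.sum_add_distrib,
    ← Finset.sum_mul, ← Finset.mul_sum, hx, hy, one_mul]

theorem Matrix.IsHermitian.sum_eigenvalues_eq_one [Fintype n] [DecidableEq n]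
    {M : Matrix n n ℂ} (hM : M.IsHermitian) (h1 : M.trace = 1) : ∑ i, hM.eigenvalues i = 1 := by
  simpa using congrArg Complex.re (hM.trace_eq_sum_eigenvalues.symm.trans h1)

theorem vnEntropy_kronecker [Fintype m] [DecidableEq m] [Fintype n] [DecidableEq n]
    {N : Matrix m m ℂ} {K : Matrix n n ℂ}
    (hN : N.IsHermitian) (hK : K.IsHermitian) (hN1 : N.trace = 1) (hK1 : K.trace = 1) :
    vnEntropy (N ⊗ₖ K) = vnEntropy N + vnEntropy K := by
  rw [vnEntropy_eq_of_charpoly_eq (hN.kronecker hK) _ (hN.charpoly_kronecker hK),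
    sum_negMulLog_mul_of_sum_eq_one (hN.sum_eigenvalues_eq_one hN1)
      (hK.sum_eigenvalues_eq_one hK1), vnEntropy_of_isHermitian hN, vnEntropy_of_isHermitian hK]

end Entropy

section ProductState

variable {l m n ι : Type*}

theorem Finset.kronecker_sum (s : Finset ι) (M : Matrix l l ℂ) (f : ι → Matrix m m ℂ) :
    M ⊗ₖ (∑ i ∈ s, f i) = ∑ i ∈ s, M ⊗ₖ f i := by
  ext ⟨a, b⟩ ⟨a', b'⟩
  simp [Matrix.sum_apply, Finset.mul_sum]

theorem Finset.sum_kronecker (s : Finset ι) (f : ι → Matrix l l ℂ) (N : Matrix m m ℂ) :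
    (∑ i ∈ s, f i) ⊗ₖ N = ∑ i ∈ s, f i ⊗ₖ N := by
  ext ⟨a, b⟩ ⟨a', b'⟩
  simp [Matrix.sum_apply, Finset.sum_mul]

theorem isHermitian_sum_conj [Fintype n] (s : Finset ι) {R : ι → Matrix n n ℂ}
    (hR : ∀ i, (R i).IsHermitian) {ρ : Matrix n n ℂ} (hρ : ρ.IsHermitian) :
    (∑ i ∈ s, R i * ρ * R i).IsHermitian := by
  refine isHermitian_iff_isSelfAdjoint.mpr (isSelfAdjoint_sum s fun i _ => ?_)
  simpa only [(hR i).star_eq] using hρ.isSelfAdjoint.conjugate (R i)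

theorem trace_sum_conj_of_idempotent {α : Type*} [CommSemiring α] [Fintype n] [DecidableEq n]
    [Fintype ι] {R : ι → Matrix n n α} (hidem : ∀ i, R i * R i = R i) (hsum : ∑ i, R i = 1)
    (ρ : Matrix n n α) : (∑ i, R i * ρ * R i).trace = ρ.trace := by
  have hterm : ∀ i, (R i * ρ * R i).trace = (ρ * R i).trace := fun i => by
    rw [trace_mul_comm, ← Matrix.mul_assoc, hidem, trace_mul_comm]
  rw [trace_sum, Finset.sum_congr rfl fun i _ => hterm i, ← trace_sum, ← Matrix.mul_sum, hsum,
    Matrix.mul_one]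

theorem prodState3_eq_reindex_kronecker (N : Matrix (l × m) (l × m) ℂ) (K : Matrix n n ℂ) :
    prodState3 N K = reindex (Equiv.prodAssoc l m n) (Equiv.prodAssoc l m n) (N ⊗ₖ K) :=
  rfl

theorem kron3_eq_prodState3 (M : Matrix l l ℂ) (N : Matrix m m ℂ) (K : Matrix n n ℂ) :
    kron3 M N K = prodState3 (M ⊗ₖ N) K :=
  rfl

theorem prodState3_mul [Fintype l] [Fintype m] [Fintype n] (N N' : Matrix (l × m) (l × m) ℂ)
    (K K' : Matrix n n ℂ) :
    prodState3 N K * prodState3 N' K' = prodState3 (N * N') (K * K') := by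
  simp only [prodState3_eq_reindex_kronecker, reindex_apply, submatrix_mul_equiv,
    mul_kronecker_mul]

theorem prodState3_sum (s : Finset ι) (f : ι → Matrix (l × m) (l × m) ℂ) (K : Matrix n n ℂ) :
    prodState3 (∑ i ∈ s, f i) K = ∑ i ∈ s, prodState3 (f i) K := by
  ext x y
  simp [prodState3, Matrix.sum_apply, Finset.sum_mul]

theorem vnEntropy_prodState3 [Fintype l] [DecidableEq l] [Fintype m] [DecidableEq m] [Fintype n]
    [DecidableEq n] {N : Matrix (l × m) (l × m) ℂ} {K : Matrix n n ℂ}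
    (hN : N.IsHermitian) (hK : K.IsHermitian) (hN1 : N.trace = 1) (hK1 : K.trace = 1) :
    vnEntropy (prodState3 N K) = vnEntropy N + vnEntropy K := by
  rw [prodState3_eq_reindex_kronecker, vnEntropy_reindex (hN.kronecker hK),
    vnEntropy_kronecker hN hK hN1 hK1]

theorem ptrC3_prodState3 [Fintype n] (N : Matrix (l × m) (l × m) ℂ) (K : Matrix n n ℂ) :
    ptrC3 (prodState3 N K) = K.trace • N := by
  ext x y
  simp [ptrC3, prodState3, trace, ← Finset.mul_sum, mul_comm]

theorem ptrBC3_prodState3 [Fintype m] [Fintype n] (N : Matrix (l × m) (l × m) ℂ)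
    (K : Matrix n n ℂ) : ptrBC3 (prodState3 N K) = K.trace • margFst N := by
  ext a a'
  simp only [ptrBC3, margFst, prodState3, Fintype.sum_prod_type, Matrix.smul_apply, smul_eq_mul,
    trace, diag, Finset.sum_mul_sum]
  rw [Finset.sum_comm]
  simp only [mul_comm]

end ProductState

instance (n : Type*) [Fintype n] [DecidableEq n] : Inhabited (VNMeas n) where
  default :=
    { P := fun j => single j j 1
      herm := fun j => by simp [IsHermitian]
      idem := fun j => by rw [single_mul_single_same, mul_one]
      rankOne := fun j => trace_single_eq_same j 1
      orth := fun j k hjk => single_mul_single_of_ne 1 j j k hjk 1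
      sum_eq := sum_single_one }

theorem SeqMeas3.fst_surjective : Function.Surjective (SeqMeas3.fst : SeqMeas3 A B → VNMeas A) :=
  fun M => ⟨⟨M, fun _ => default⟩, rfl⟩

def SeqMeas3.proj (m : SeqMeas3 A B) (p : A × B) : Matrix (A × B) (A × B) ℂ :=
  m.fst.P p.1 ⊗ₖ (m.snd p.1).P p.2

theorem SeqMeas3.proj_isHermitian (m : SeqMeas3 A B) (p : A × B) : (m.proj p).IsHermitian :=
  (m.fst.herm p.1).kronecker ((m.snd p.1).herm p.2)

theorem SeqMeas3.proj_mul_self (m : SeqMeas3 A B) (p : A × B) : m.proj p * m.proj p = m.proj p := by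
  rw [proj, ← mul_kronecker_mul, m.fst.idem, (m.snd p.1).idem]

theorem SeqMeas3.sum_proj (m : SeqMeas3 A B) : ∑ p, m.proj p = 1 := by
  simp only [Fintype.sum_prod_type, proj, ← Finset.kronecker_sum, VNMeas.sum_eq,
    ← Finset.sum_kronecker, one_kronecker_one]

def measSeq (m : SeqMeas3 A B) (ρ : Matrix (A × B) (A × B) ℂ) : Matrix (A × B) (A × B) ℂ :=
  ∑ p, m.proj p * ρ * m.proj p

theorem measSeq_isHermitian (m : SeqMeas3 A B) {ρ : Matrix (A × B) (A × B) ℂ}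
    (hρ : ρ.IsHermitian) : (measSeq m ρ).IsHermitian :=
  isHermitian_sum_conj _ m.proj_isHermitian hρ

theorem trace_measSeq (m : SeqMeas3 A B) (ρ : Matrix (A × B) (A × B) ℂ) :
    (measSeq m ρ).trace = ρ.trace :=
  trace_sum_conj_of_idempotent m.proj_mul_self m.sum_proj ρ

theorem meas1_prodState3 (m : SeqMeas3 A B) (ρ : Matrix (A × B) (A × B) ℂ) (K : Matrix C C ℂ) :
    meas1 m (prodState3 ρ K) = prodState3 (measFst m.fst ρ) K := by
  simp only [meas1, measFst, kron3_eq_prodState3, prodState3_mul, Matrix.one_mul, Matrix.mul_one,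
    prodState3_sum]

theorem meas2_prodState3 (m : SeqMeas3 A B) (ρ : Matrix (A × B) (A × B) ℂ) (K : Matrix C C ℂ) :
    meas2 m (prodState3 ρ K) = prodState3 (measSeq m ρ) K := by
  simp only [meas2, measSeq, SeqMeas3.proj, Fintype.sum_prod_type, kron3_eq_prodState3,
    prodState3_mul, Matrix.one_mul, Matrix.mul_one, prodState3_sum]

def discordVal (M : VNMeas A) (ρ : Matrix (A × B) (A × B) ℂ) : ℝ :=
  (vnEntropy (measFst M ρ) - vnEntropy (margFst (measFst M ρ))) -
    (vnEntropy ρ - vnEntropy (margFst ρ))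

theorem mqd3Val_prodState3 (m : SeqMeas3 A B) {ρ : Matrix (A × B) (A × B) ℂ}
    {K : Matrix C C ℂ} (hρ : ρ.IsHermitian) (hρ1 : ρ.trace = 1) (hK : K.IsHermitian)
    (hK1 : K.trace = 1) :
    mqd3Val m (prodState3 ρ K) = discordVal m.fst ρ := by
  rw [mqd3Val, discordVal, meas1_prodState3, meas2_prodState3]
  simp only [ptrC3_prodState3, ptrBC3_prodState3, hK1, one_smul]
  rw [vnEntropy_prodState3 (measSeq_isHermitian m hρ) hK ((trace_measSeq m ρ).trans hρ1) hK1,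
    vnEntropy_prodState3 hρ hK hρ1 hK1]
  ring

/-- `D_{A;B;C}(ρ^{AB} ⊗ ρ^C) = D_{A;B}(ρ^{AB})`. -/
theorem mqd3_prod_eq_discord
    (ρAB : Matrix (A × B) (A × B) ℂ) (ρC : Matrix C C ℂ)
    (hAB : IsState ρAB) (hC : IsState ρC) :
    mqd3 (prodState3 ρAB ρC) = discord ρAB := by
  have hval : ∀ m : SeqMeas3 A B, mqd3Val m (prodState3 ρAB ρC) = discordVal m.fst ρAB :=
    fun m => mqd3Val_prodState3 m hAB.1.1 hAB.2 hC.1.1 hC.2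
  simp only [mqd3, hval]
  exact SeqMeas3.fst_surjective.iInf_comp (discordVal · ρAB)

end
end
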